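/- arXiv:1807.10498 — 6 statements merged into one kernel-verified Lean document; each statement's English description precedes it below -/
import Mathlib

section
/- Let X be a finite simplicial complex and G_{1,X} as above. Let n ≥ 2 and let η : {1,…,n} → (nonempty subsets of V(G_{1,X})) be a graph homomorphism multi-valued map from K_n, i.e., for all i ≠ j and all σ ∈ η(i), τ ∈ η(j), either σ ⊆ τ or τ ⊆ σ. Then the common neighborhood ⋂_{i=1}^n N(η(i)) in G_{1,X} is nonempty, i.e., there exists a simplex τ_0 of X such that for every i and every σ ∈ η(i), either σ ⊆ τ_0 or τ_0 ⊆ σ. -/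
/-- Proposition 4.1: for a multihomomorphism `η : K_n → G_{1,X}` (`n ≥ 2`), the common
neighborhood `⋂ N(η(i))` is nonempty. -/
theorem stmt5 {V : Type*} [DecidableEq V] (X : Finset (Finset V))
    (hne : ∀ σ ∈ X, σ.Nonempty)
    (hdc : ∀ σ ∈ X, ∀ τ : Finset V, τ.Nonempty → τ ⊆ σ → τ ∈ X)
    (n : ℕ) (hn : 2 ≤ n) (η : Fin n → Finset (Finset V))
    (hsub : ∀ i, η i ⊆ X) (hnonempty : ∀ i, (η i).Nonempty)
    (hhom : ∀ i j, i ≠ j → ∀ σ ∈ η i, ∀ τ ∈ η j, σ ⊆ τ ∨ τ ⊆ σ) :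
    ∃ τ₀ ∈ X, ∀ i, ∀ σ ∈ η i, σ ⊆ τ₀ ∨ τ₀ ⊆ σ := by
  classical
  -- the set of all simplices appearing in some η i
  set S : Finset (Finset V) := (Finset.univ : Finset (Fin n)).biUnion η with hS
  have hSne : S.Nonempty := by
    obtain ⟨σ, hσ⟩ := hnonempty ⟨0, by omega⟩
    exact ⟨σ, Finset.mem_biUnion.2 ⟨⟨0, by omega⟩, Finset.mem_univ _, hσ⟩⟩
  -- pick a of minimal cardinality
  obtain ⟨a, haS, hamin⟩ := S.exists_min_image Finset.card hSne
  obtain ⟨i₀, -, hai₀⟩ := Finset.mem_biUnion.1 haS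
  -- a is contained in every cross element
  have hacross : ∀ j, j ≠ i₀ → ∀ x ∈ η j, a ⊆ x := by
    intro j hj x hx
    rcases hhom i₀ j (Ne.symm hj) a hai₀ x hx with h | h
    · exact h
    · have hx' : x ∈ S := Finset.mem_biUnion.2 ⟨j, Finset.mem_univ _, hx⟩
      have := hamin x hx'
      exact le_of_eq (Finset.eq_of_subset_of_card_le h this).symm
  -- the "low" part of η i₀
  set A : Finset (Finset V) :=
    (η i₀).filter (fun y => ∀ j, j ≠ i₀ → ∀ x ∈ η j, y ⊆ x) with hA
  have haA : a ∈ A := Finset.mem_filter.2 ⟨hai₀, hacross⟩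
  set τ₀ : Finset V := A.sup id with hτ
  have hsubτ : a ⊆ τ₀ := Finset.le_sup (f := id) haA
  -- τ₀ is contained in every cross element
  have hτcross : ∀ j, j ≠ i₀ → ∀ x ∈ η j, τ₀ ⊆ x := by
    intro j hj x hx
    show A.sup id ≤ x
    exact Finset.sup_le fun y hy => (Finset.mem_filter.1 hy).2 j hj x hx
  -- τ₀ ∈ X
  obtain ⟨j₁, hj₁⟩ := Fintype.exists_ne_of_one_lt_card
    (by simpa using (by omega : 1 < n)) i₀
  obtain ⟨x₁, hx₁⟩ := hnonempty j₁
  have hτne : τ₀.Nonempty :=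
    (hne a (hsub i₀ hai₀)).mono hsubτ
  have hτX : τ₀ ∈ X :=
    hdc x₁ (hsub j₁ hx₁) τ₀ hτne (hτcross j₁ hj₁ x₁ hx₁)
  refine ⟨τ₀, hτX, fun i σ hσ => ?_⟩
  by_cases hi : i = i₀
  · subst hi
    by_cases hσA : σ ∈ A
    · exact Or.inl (Finset.le_sup (f := id) hσA)
    · -- some cross element x with ¬ σ ⊆ x, hence x ⊆ σ
      have h' : ¬ (∀ j, j ≠ i → ∀ x ∈ η j, σ ⊆ x) := fun h =>
        hσA (Finset.mem_filter.2 ⟨hσ, h⟩)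
      push_neg at h'
      obtain ⟨j, hj, x, hx, hnsub⟩ := h'
      have hxσ : x ⊆ σ := (hhom i j (Ne.symm hj) σ hσ x hx).resolve_left hnsub
      refine Or.inr ?_
      show A.sup id ≤ σ
      exact Finset.sup_le fun y hy => ((Finset.mem_filter.1 hy).2 j hj x hx).trans hxσ
  · exact Or.inr (hτcross i hi σ hσ)
end

section
/- Let X be a finite simplicial complex and η ∈ Hom(K_n, G_{1,X}) with n ≥ 2. Let k attain the minimum O(η) = min over i of min over σ ∈ η(i) of dim(σ), and let σ^k_1,…,σ^k_{i_1} be all elements of η(k) of dimension O(η). Then τ_0 = σ^k_1 ∪ … ∪ σ^k_{i_1} is a simplex of X, and τ_0 ∈ N(η(i)) for every i ≠ k. -/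
/-- The union `τ₀` of all elements of `η(k)` of minimal dimension `O(η)` is a simplex of
`X`, and `τ₀ ∈ N(η(i))` for every `i ≠ k`. -/
theorem stmt7 {V : Type*} [DecidableEq V] (X : Finset (Finset V))
    (hne : ∀ σ ∈ X, σ.Nonempty)
    (hdc : ∀ σ ∈ X, ∀ τ : Finset V, τ.Nonempty → τ ⊆ σ → τ ∈ X)
    (n : ℕ) (hn : 2 ≤ n) (η : Fin n → Finset (Finset V))
    (hsub : ∀ i, η i ⊆ X) (hnonempty : ∀ i, (η i).Nonempty)
    (hhom : ∀ i j, i ≠ j → ∀ σ ∈ η i, ∀ τ ∈ η j, σ ⊆ τ ∨ τ ⊆ σ)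
    (k : Fin n) (d : ℕ)
    (hlb : ∀ i, ∀ σ ∈ η i, d ≤ σ.card)
    (hattain : ∃ σ ∈ η k, σ.card = d) :
    ((η k).filter (fun σ => σ.card = d)).sup id ∈ X ∧
      ∀ i, i ≠ k → ∀ τ ∈ η i,
        ((η k).filter (fun σ => σ.card = d)).sup id ⊆ τ ∨
          τ ⊆ ((η k).filter (fun σ => σ.card = d)).sup id := by
  set τ₀ := ((η k).filter (fun σ => σ.card = d)).sup id with hτ₀
  -- every minimal element is contained in any τ ∈ η i, i ≠ k
  have key : ∀ i, i ≠ k → ∀ τ ∈ η i, τ₀ ⊆ τ := by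
    intro i hik τ hτ
    intro x hx
    rw [hτ₀, Finset.mem_sup] at hx
    obtain ⟨σ, hσ, hxσ⟩ := hx
    simp only [id] at hxσ
    rw [Finset.mem_filter] at hσ
    obtain ⟨hσk, hσd⟩ := hσ
    rcases hhom k i (Ne.symm hik) σ hσk τ hτ with h | h
    · exact h hxσ
    · have : τ = σ := Finset.eq_of_subset_of_card_le h (by rw [hσd]; exact hlb i τ hτ)
      rwa [this]
  -- find i ≠ k
  have : 1 < Fintype.card (Fin n) := by rw [Fintype.card_fin]; omega
  obtain ⟨i, hik⟩ := Fintype.exists_ne_of_one_lt_card this k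
  obtain ⟨τ, hτ⟩ := hnonempty i
  obtain ⟨σ, hσk, hσd⟩ := hattain
  have hσmem : σ ∈ (η k).filter (fun σ => σ.card = d) := Finset.mem_filter.2 ⟨hσk, hσd⟩
  have hσne : σ.Nonempty := hne σ (hsub k hσk)
  have hτ₀ne : τ₀.Nonempty := hσne.mono (Finset.le_sup (f := id) hσmem)
  constructor
  · exact hdc τ (hsub i hτ) τ₀ hτ₀ne (key i hik τ hτ)
  · intro j hjk τ' hτ'
    exact Or.inl (key j hjk τ' hτ')
end

section
/- Let X be a finite simplicial complex, n ≥ 3, and let ρ ∈ Hom(K_{n-1}, G_{1,X}). Define η_1 : {1,…,n} → 2^{V(G_{1,X})} \ {∅} by η_1(i) = ρ(i) for i ≤ n−1 and η_1(n) = ⋂_{i=1}^{n-1} N(ρ(i)). Then η_1(n) is nonempty and η_1 ∈ Hom(K_n, G_{1,X}); moreover η_1 is the unique maximal element of the fiber φ^{-1}(ρ) of the restriction map φ : Hom(K_n, G_{1,X}) → Hom(K_{n-1}, G_{1,X}), φ(η) = η|_{{1,…,n-1}}, under the pointwise-inclusion order. -/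
/-- A multihomomorphism `K_n → G_{1,X}`: each `η i` is a nonempty set of simplices of `X`
and all cross pairs are comparable under inclusion. -/
def IsMultiHom {V : Type*} (X : Finset (Finset V)) {n : ℕ}
    (η : Fin n → Finset (Finset V)) : Prop :=
  (∀ i, η i ⊆ X) ∧ (∀ i, (η i).Nonempty) ∧
    ∀ i j, i ≠ j → ∀ σ ∈ η i, ∀ τ ∈ η j, σ ⊆ τ ∨ τ ⊆ σ

/-- Extend `ρ : Fin m → Finset (Finset V)` by the set `B` in the last coordinate. -/
def extendLast {V : Type*} {m : ℕ} (ρ : Fin m → Finset (Finset V))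
    (B : Finset (Finset V)) : Fin (m + 1) → Finset (Finset V) :=
  Fin.snoc ρ B

open scoped Classical in
/-- Extending `ρ ∈ Hom(K_{n-1}, G_{1,X})` (here `n = m+1`, `m ≥ 2`) by the common
neighborhood `⋂ N(ρ(i))` in the last coordinate gives a well-defined element
`η₁ ∈ Hom(K_n, G_{1,X})`, which is the unique maximal element of the fiber
`φ⁻¹(ρ)` of the restriction map `φ(η) = η|_{1,…,n-1}`. -/
theorem stmt8 {V : Type*} [DecidableEq V] (X : Finset (Finset V))
    (hne : ∀ σ ∈ X, σ.Nonempty)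
    (hdc : ∀ σ ∈ X, ∀ τ : Finset V, τ.Nonempty → τ ⊆ σ → τ ∈ X)
    (m : ℕ) (hm : 2 ≤ m) (ρ : Fin m → Finset (Finset V))
    (hρ : IsMultiHom X ρ) :
    (X.filter (fun τ => ∀ i, ∀ σ ∈ ρ i, σ ⊆ τ ∨ τ ⊆ σ)).Nonempty ∧
    IsMultiHom X
      (extendLast ρ (X.filter (fun τ => ∀ i, ∀ σ ∈ ρ i, σ ⊆ τ ∨ τ ⊆ σ))) ∧
    ∀ γ : Fin (m + 1) → Finset (Finset V), IsMultiHom X γ →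
      (∀ i : Fin m, γ i.castSucc = ρ i) →
      ∀ j, γ j ⊆
        extendLast ρ (X.filter (fun τ => ∀ i, ∀ σ ∈ ρ i, σ ⊆ τ ∨ τ ⊆ σ)) j := by
  classical
  obtain ⟨hsub, hnen, hcross⟩ := hρ
  set F := X.filter (fun τ => ∀ i, ∀ σ ∈ ρ i, σ ⊆ τ ∨ τ ⊆ σ) with hFdef
  have hF : ∀ σ ∈ F, σ ∈ X ∧ ∀ i, ∀ σ' ∈ ρ i, σ' ⊆ σ ∨ σ ⊆ σ' := by
    intro σ h
    exact Finset.mem_filter.mp h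
  have hFmem : ∀ σ, σ ∈ X → (∀ i, ∀ σ' ∈ ρ i, σ' ⊆ σ ∨ σ ⊆ σ') → σ ∈ F := by
    intro σ h1 h2
    exact Finset.mem_filter.mpr ⟨h1, h2⟩
  -- the union of all ρ i, and a minimal (by card) element τ of it
  set U := Finset.univ.biUnion ρ with hU
  have hUne : U.Nonempty := by
    have h0 : (0 : ℕ) < m := by omega
    obtain ⟨σ, hσ⟩ := hnen ⟨0, h0⟩
    exact ⟨σ, Finset.mem_biUnion.mpr ⟨_, Finset.mem_univ _, hσ⟩⟩
  obtain ⟨τ, hτU, hτmin⟩ := Finset.exists_min_image U Finset.card hUne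
  obtain ⟨i₀, -, hτi₀⟩ := Finset.mem_biUnion.mp hτU
  have hτsub : ∀ j, j ≠ i₀ → ∀ π ∈ ρ j, τ ⊆ π := by
    intro j hj π hπ
    rcases hcross i₀ j (fun h => hj h.symm) τ hτi₀ π hπ with h | h
    · exact h
    · have hc := hτmin π (Finset.mem_biUnion.mpr ⟨j, Finset.mem_univ _, hπ⟩)
      have : π = τ := Finset.eq_of_subset_of_card_le h hc
      exact this ▸ Finset.Subset.refl _
  -- pick j₀ ≠ i₀
  obtain ⟨j₀, hj₀⟩ : ∃ j₀ : Fin m, j₀ ≠ i₀ := by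
    rcases eq_or_ne i₀ ⟨0, by omega⟩ with h | h
    · exact ⟨⟨1, by omega⟩, by simp [h, Fin.ext_iff]⟩
    · exact ⟨⟨0, by omega⟩, fun hh => h hh.symm⟩
  obtain ⟨π₀, hπ₀⟩ := hnen j₀
  -- the candidate: common intersection of all members of all ρ j, j ≠ i₀
  set C := π₀.filter (fun v => ∀ j, j ≠ i₀ → ∀ π ∈ ρ j, v ∈ π) with hC
  have hτC : τ ⊆ C := by
    intro v hv
    exact Finset.mem_filter.mpr ⟨hτsub j₀ hj₀ π₀ hπ₀ hv, fun j hj π hπ => hτsub j hj π hπ hv⟩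
  have hCne : C.Nonempty := by
    obtain ⟨v, hv⟩ := hne τ (hsub i₀ hτi₀)
    exact ⟨v, hτC hv⟩
  have hCX : C ∈ X := hdc π₀ (hsub j₀ hπ₀) C hCne (Finset.filter_subset _ _)
  have hCcomp : ∀ i, ∀ σ ∈ ρ i, σ ⊆ C ∨ C ⊆ σ := by
    intro i σ hσ
    rcases eq_or_ne i i₀ with rfl | hi
    · by_cases hall : ∀ j, j ≠ i → ∀ π ∈ ρ j, σ ⊆ π
      · left
        intro v hv
        exact Finset.mem_filter.mpr ⟨hall j₀ hj₀ π₀ hπ₀ hv, fun j hj π hπ => hall j hj π hπ hv⟩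
      · push_neg at hall
        obtain ⟨j, hj, π, hπ, hns⟩ := hall
        rcases hcross i j (fun h => hj h.symm) σ hσ π hπ with h | h
        · exact absurd h hns
        · right
          intro v hv
          exact h ((Finset.mem_filter.mp hv).2 j hj π hπ)
    · right
      intro v hv
      exact (Finset.mem_filter.mp hv).2 i hi σ hσ
  have hCF : C ∈ F := hFmem C hCX hCcomp
  refine ⟨⟨C, hCF⟩, ⟨?_, ?_, ?_⟩, ?_⟩
  · -- all values ⊆ X
    intro i
    rcases Fin.eq_castSucc_or_eq_last i with ⟨i', rfl⟩ | rfl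
    · simpa only [extendLast, Fin.snoc_castSucc] using hsub i'
    · simpa only [extendLast, Fin.snoc_last] using Finset.filter_subset _ _
  · -- all values nonempty
    intro i
    rcases Fin.eq_castSucc_or_eq_last i with ⟨i', rfl⟩ | rfl
    · simpa only [extendLast, Fin.snoc_castSucc] using hnen i'
    · simp only [extendLast, Fin.snoc_last]
      exact ⟨C, hCF⟩
  · -- cross comparability
    intro i j hij σ hσ τ' hτ'
    rcases Fin.eq_castSucc_or_eq_last i with ⟨i', rfl⟩ | rfl <;>
      rcases Fin.eq_castSucc_or_eq_last j with ⟨j', rfl⟩ | rfl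
    · simp only [extendLast, Fin.snoc_castSucc] at hσ hτ'
      exact hcross i' j' (fun h => hij (by rw [h])) σ hσ τ' hτ'
    · simp only [extendLast, Fin.snoc_castSucc] at hσ
      simp only [extendLast, Fin.snoc_last] at hτ'
      exact (hF τ' hτ').2 i' σ hσ
    · simp only [extendLast, Fin.snoc_last] at hσ
      simp only [extendLast, Fin.snoc_castSucc] at hτ'
      exact ((hF σ hσ).2 j' τ' hτ').symm
    · exact absurd rfl hij
  · -- maximality
    intro γ hγ hres j
    rcases Fin.eq_castSucc_or_eq_last j with ⟨j', rfl⟩ | rfl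
    · simp only [extendLast, Fin.snoc_castSucc]
      rw [hres j']
    · intro σ hσ
      simp only [extendLast, Fin.snoc_last]
      refine hFmem σ (hγ.1 _ hσ) ?_
      intro i σ' hσ'
      have hi : (Fin.castSucc i) ≠ Fin.last m := (Fin.castSucc_lt_last i).ne
      exact hγ.2.2 i.castSucc (Fin.last m) hi σ' ((hres i).symm ▸ hσ') σ hσ
end

section
/- Let X be a finite simplicial complex with vertices of G_{1,X} enumerated σ_1,…,σ_p so that dim(σ_i) ≥ dim(σ_{i+1}), and suppose dim(σ_1) ≥ 1. If τ is a set of simplices of X with σ_1 ∈ τ, τ ⊆ N(σ_1), and there exists i_0 ≥ 2 with τ \ {σ_1} ⊆ N(σ_{i_0}) and dim(σ_{i_0}) ≤ dim(σ_1), then σ_1 ∩ σ_{i_0} is nonempty and τ ⊆ N(σ_1 ∩ σ_{i_0}), where σ_1 ∩ σ_{i_0} is a simplex of X of dimension strictly less than dim(σ_1). -/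
/-- If `σ₁` has maximal dimension in `X`, `τ ⊆ N(σ₁)` contains `σ₁` and some further
simplex, and `τ \ {σ₁} ⊆ N(σ₀)` for some simplex `σ₀ ≠ σ₁` with `dim σ₀ ≤ dim σ₁`,
then `σ₁ ∩ σ₀` is a nonempty simplex of `X` of dimension strictly less than `dim σ₁`
and `τ ⊆ N(σ₁ ∩ σ₀)`. -/
theorem stmt10 {V : Type*} [DecidableEq V] (X : Finset (Finset V))
    (hne : ∀ σ ∈ X, σ.Nonempty)
    (hdc : ∀ σ ∈ X, ∀ τ : Finset V, τ.Nonempty → τ ⊆ σ → τ ∈ X)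
    (σ₁ : Finset V) (hσ₁ : σ₁ ∈ X) (hdim1 : 2 ≤ σ₁.card)
    (hmax : ∀ ρ ∈ X, ρ.card ≤ σ₁.card)
    (τ : Finset (Finset V)) (hτX : ∀ ρ ∈ τ, ρ ∈ X)
    (hσ₁τ : σ₁ ∈ τ) (hrest : (τ.erase σ₁).Nonempty)
    (hτN : ∀ ρ ∈ τ, ρ ⊆ σ₁ ∨ σ₁ ⊆ ρ)
    (σ₀ : Finset V) (hσ₀ : σ₀ ∈ X) (hσ₀ne : σ₀ ≠ σ₁)
    (hσ₀dim : σ₀.card ≤ σ₁.card)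
    (hτ₀ : ∀ ρ ∈ τ.erase σ₁, ρ ⊆ σ₀ ∨ σ₀ ⊆ ρ) :
    (σ₁ ∩ σ₀).Nonempty ∧ (σ₁ ∩ σ₀) ∈ X ∧ (σ₁ ∩ σ₀).card < σ₁.card ∧
      ∀ ρ ∈ τ, ρ ⊆ σ₁ ∩ σ₀ ∨ σ₁ ∩ σ₀ ⊆ ρ := by
  -- every element of τ.erase σ₁ is a subset of σ₁
  have hsub : ∀ ρ ∈ τ.erase σ₁, ρ ⊆ σ₁ := by
    intro ρ hρ
    have hρτ := Finset.mem_of_mem_erase hρ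
    rcases hτN ρ hρτ with h | h
    · exact h
    · exfalso
      have hle : σ₁.card ≤ ρ.card := Finset.card_le_card h
      have : ρ = σ₁ := (Finset.eq_of_subset_of_card_le h
        (hmax ρ (hτX ρ hρτ))).symm
      exact Finset.ne_of_mem_erase hρ this
  -- nonempty
  obtain ⟨ρ₀, hρ₀⟩ := hrest
  have hρ₀ne : ρ₀.Nonempty := hne ρ₀ (hτX ρ₀ (Finset.mem_of_mem_erase hρ₀))
  have hnonempty : (σ₁ ∩ σ₀).Nonempty := by
    rcases hτ₀ ρ₀ hρ₀ with h | h
    · obtain ⟨x, hx⟩ := hρ₀ne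
      exact ⟨x, Finset.mem_inter.2 ⟨hsub ρ₀ hρ₀ hx, h hx⟩⟩
    · obtain ⟨x, hx⟩ := hne σ₀ hσ₀
      exact ⟨x, Finset.mem_inter.2 ⟨hsub ρ₀ hρ₀ (h hx), hx⟩⟩
  refine ⟨hnonempty, hdc σ₁ hσ₁ _ hnonempty Finset.inter_subset_left, ?_, ?_⟩
  · rcases lt_or_eq_of_le (Finset.card_le_card
      (Finset.inter_subset_left : σ₁ ∩ σ₀ ⊆ σ₁)) with h | h
    · exact h
    · exfalso
      have h1 : σ₁ ∩ σ₀ = σ₁ :=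
        Finset.eq_of_subset_of_card_le Finset.inter_subset_left h.ge
      have h2 : σ₁ ⊆ σ₀ := by
        intro x hx
        have : x ∈ σ₁ ∩ σ₀ := h1.symm ▸ hx
        exact (Finset.mem_inter.1 this).2
      exact hσ₀ne (Finset.eq_of_subset_of_card_le h2 hσ₀dim).symm
  · intro ρ hρ
    by_cases hρσ₁ : ρ = σ₁
    · subst hρσ₁; exact Or.inr Finset.inter_subset_left
    · have hρe : ρ ∈ τ.erase σ₁ := Finset.mem_erase.2 ⟨hρσ₁, hρ⟩
      rcases hτ₀ ρ hρe with h | h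
      · exact Or.inl (Finset.subset_inter (hsub ρ hρe) h)
      · exact Or.inr (Finset.inter_subset_right.trans h)
end

section
/- Let X be a finite simplicial complex and let σ be a 1-dimensional simplex (edge) of X. Then there is no 0-dimensional simplex {x} of X with x ∉ σ such that N(σ) \ {σ} ⊆ N({x}) in G_{1,X}; in fact if N(σ) \ {σ} ⊆ N(ρ) for some simplex ρ of dimension 0, then σ ⊆ ρ, a contradiction. Hence N(σ) \ {σ} ⊄ N(ρ) for every 0-simplex ρ, so (N(σ), N(σ) \ {σ}) is a free pair in the complex whose facets are the sets N(ρ) for ρ ranging over simplices of dimension ≤ 1. -/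
/-- For a 1-dimensional simplex `σ` of `X`, there is no 0-dimensional simplex `ρ` with
`N(σ) \ {σ} ⊆ N(ρ)` in `G_{1,X}`. -/
theorem stmt11 {V : Type*} [DecidableEq V] (X : Finset (Finset V))
    (hne : ∀ σ ∈ X, σ.Nonempty)
    (hdc : ∀ σ ∈ X, ∀ τ : Finset V, τ.Nonempty → τ ⊆ σ → τ ∈ X)
    (σ : Finset V) (hσ : σ ∈ X) (hσdim : σ.card = 2) :
    ∀ ρ ∈ X, ρ.card = 1 →
      ¬ (∀ τ ∈ X, τ ≠ σ → (τ ⊆ σ ∨ σ ⊆ τ) → (τ ⊆ ρ ∨ ρ ⊆ τ)) := by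
  intro ρ hρ hρcard h
  obtain ⟨x, y, hxy, hσeq⟩ := Finset.card_eq_two.mp hσdim
  have key : ∀ z ∈ σ, z ∈ ρ := by
    intro z hz
    have hzX : ({z} : Finset V) ∈ X :=
      hdc σ hσ {z} (Finset.singleton_nonempty z) (Finset.singleton_subset_iff.mpr hz)
    have hne' : ({z} : Finset V) ≠ σ := by
      intro heq
      rw [← heq] at hσdim
      simp at hσdim
    have := h {z} hzX hne' (Or.inl (Finset.singleton_subset_iff.mpr hz))
    rcases this with h1 | h2
    · exact Finset.singleton_subset_iff.mp h1
    · obtain ⟨w, hw⟩ := Finset.card_eq_one.mp hρcard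
      rw [hw] at h2 ⊢
      have : w = z := Finset.mem_singleton.mp (h2 (Finset.mem_singleton_self w))
      simp [this]
  have hsub : σ ⊆ ρ := key
  have := Finset.card_le_card hsub
  omega
end

section
/- Let X be a finite simplicial complex and η ∈ Hom(K_2, G_{1,X}). Then there exists a simplex τ of X such that every element of η(1) ∪ η(2) is comparable to τ under inclusion; consequently every simplex of the neighborhood complex N(G_{1,X}) of the form η(1) ∪ η(2) with η(1) × η(2) ⊆ E(G_{1,X}) is contained in N(τ) for some simplex τ. -/
lemma stmt15_aux {V : Type*} [DecidableEq V] (X : Finset (Finset V))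
    (hne : ∀ σ ∈ X, σ.Nonempty)
    (hdc : ∀ σ ∈ X, ∀ τ : Finset V, τ.Nonempty → τ ⊆ σ → τ ∈ X)
    (η₁ η₂ : Finset (Finset V)) (h₁X : η₁ ⊆ X) (h₂X : η₂ ⊆ X)
    (h₂ : η₂.Nonempty)
    (hhom : ∀ σ ∈ η₁, ∀ τ ∈ η₂, σ ⊆ τ ∨ τ ⊆ σ)
    (M : Finset V) (hM : M ∈ η₁)
    (hMmax : ∀ τ ∈ η₂, τ.card ≤ M.card) :
    ∃ τ ∈ X, ∀ ρ ∈ η₁ ∪ η₂, ρ ⊆ τ ∨ τ ⊆ ρ := by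
  classical
  set T : Finset V := η₂.sup id with hT
  have hsub : ∀ τ ∈ η₂, τ ⊆ M := by
    intro τ hτ
    rcases hhom M hM τ hτ with h | h
    · have := Finset.eq_of_subset_of_card_le h (hMmax τ hτ)
      exact this ▸ subset_rfl
    · exact h
  have hTM : T ⊆ M := Finset.sup_le hsub
  have hTne : T.Nonempty := by
    obtain ⟨τ, hτ⟩ := h₂
    obtain ⟨v, hv⟩ := hne τ (h₂X hτ)
    exact ⟨v, Finset.mem_sup.2 ⟨τ, hτ, hv⟩⟩
  refine ⟨T, hdc M (h₁X hM) T hTne hTM, ?_⟩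
  intro ρ hρ
  rcases Finset.mem_union.1 hρ with hρ1 | hρ2
  · by_cases hall : ∀ τ ∈ η₂, τ ⊆ ρ
    · exact Or.inr (Finset.sup_le hall)
    · push_neg at hall
      obtain ⟨τ, hτ, hτρ⟩ := hall
      rcases hhom ρ hρ1 τ hτ with h | h
      · exact Or.inl (h.trans (Finset.le_sup (f := id) hτ))
      · exact absurd h hτρ
  · exact Or.inl (Finset.le_sup (f := id) hρ2)


/-- The `n = 2` case of Proposition 4.1: for `η ∈ Hom(K₂, G_{1,X})` there is a simplex
`τ` of `X` comparable to every element of `η(1) ∪ η(2)`. -/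
theorem stmt15 {V : Type*} [DecidableEq V] (X : Finset (Finset V))
    (hne : ∀ σ ∈ X, σ.Nonempty)
    (hdc : ∀ σ ∈ X, ∀ τ : Finset V, τ.Nonempty → τ ⊆ σ → τ ∈ X)
    (η₁ η₂ : Finset (Finset V)) (h₁X : η₁ ⊆ X) (h₂X : η₂ ⊆ X)
    (h₁ : η₁.Nonempty) (h₂ : η₂.Nonempty)
    (hhom : ∀ σ ∈ η₁, ∀ τ ∈ η₂, σ ⊆ τ ∨ τ ⊆ σ) :
    ∃ τ ∈ X, ∀ ρ ∈ η₁ ∪ η₂, ρ ⊆ τ ∨ τ ⊆ ρ := by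
  classical
  obtain ⟨M, hM, hMmax⟩ := (η₁ ∪ η₂).exists_max_image Finset.card
    (h₁.mono Finset.subset_union_left)
  rcases Finset.mem_union.1 hM with hM1 | hM2
  · exact stmt15_aux X hne hdc η₁ η₂ h₁X h₂X h₂ hhom M hM1
      (fun τ hτ => hMmax τ (Finset.mem_union_right _ hτ))
  · obtain ⟨τ, hτX, hτ⟩ := stmt15_aux X hne hdc η₂ η₁ h₂X h₁X h₁
      (fun σ hσ τ hτ => (hhom τ hτ σ hσ).symm) M hM2
      (fun τ hτ => hMmax τ (Finset.mem_union_left _ hτ))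
    exact ⟨τ, hτX, fun ρ hρ => hτ ρ (by
      rcases Finset.mem_union.1 hρ with h | h
      · exact Finset.mem_union_right _ h
      · exact Finset.mem_union_left _ h)⟩
end
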